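/- arXiv:1510.06353 — 2 statements merged into one kernel-verified Lean document; each statement's English description precedes it below -/
import Mathlib

section
/- Variation estimate (decay case): Suppose (-Δ+V)φ = λφ with V ≥ 0 on Ω, Dirichlet boundary conditions. There is a dimensional constant c_n such that if c > 0, x₀ ∈ Ω with φ(x₀) ≠ 0, V(x) - λ ≥ c holds uniformly on the ball B = B(x₀, (c_n/√c)·√( λ/c + log( c_n ‖φ‖_{L^∞}/|φ(x₀)| ) )) ⊂ Ω, then sup_{x∈B} |φ(x)| / inf_{x∈B} |φ(x)| ≥ 2. -/
open MeasureTheory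

open Filter Topology

section Aux

open Filter Topology

local notation "⟪" x ", " y "⟫" => @inner ℝ _ _ x y

/-- 1-d second derivative test at a local max. -/
lemma deriv2_nonpos {g g' : ℝ → ℝ} {L : ℝ}
    (hg : ∀ᶠ t in 𝓝 (0:ℝ), HasDerivAt g (g' t) t)
    (hL : HasDerivAt g' L 0) (hg0 : g' 0 = 0) (hmax : IsLocalMax g 0) : L ≤ 0 := by
  by_contra hc
  push_neg at hc
  have hslope : Tendsto (slope g' 0) (𝓝[≠] (0:ℝ)) (𝓝 L) :=
    hasDerivAt_iff_tendsto_slope.mp hL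
  have hpos : ∀ᶠ t in 𝓝[≠] (0:ℝ), 0 < slope g' 0 t :=
    hslope.eventually (eventually_gt_nhds hc)
  have hpos' : ∀ᶠ t in 𝓝 (0:ℝ), t ≠ 0 → 0 < slope g' 0 t :=
    eventually_nhdsWithin_iff.mp hpos
  have hall : ∀ᶠ t in 𝓝 (0:ℝ),
      (HasDerivAt g (g' t) t ∧ g t ≤ g 0) ∧ (t ≠ 0 → 0 < slope g' 0 t) :=
    (hg.and hmax).and hpos'
  rcases Metric.eventually_nhds_iff.mp hall with ⟨δ, hδ, hδall⟩
  have hhalf : ∀ t : ℝ, t ∈ Set.Icc (0:ℝ) (δ/2) → dist t 0 < δ := by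
    intro t ht
    rw [Real.dist_eq, sub_zero, abs_of_nonneg ht.1]
    linarith [ht.2]
  have hmono : StrictMonoOn g (Set.Icc (0:ℝ) (δ/2)) := by
    apply strictMonoOn_of_deriv_pos (convex_Icc _ _)
    · intro t ht
      exact ((hδall (hhalf t ht)).1.1).continuousAt.continuousWithinAt
    · intro t ht
      rw [interior_Icc] at ht
      have h1 : dist t 0 < δ := by
        rw [Real.dist_eq, sub_zero, abs_of_nonneg ht.1.le]; linarith [ht.2]
      have h2 := hδall h1
      rw [(h2.1.1).deriv]
      have h3 := h2.2 (ne_of_gt ht.1)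
      rw [slope_def_field] at h3
      have : 0 < g' t / t := by
        simpa [hg0] using h3
      have ht0 : 0 < t := ht.1
      by_contra hle
      push_neg at hle
      nlinarith [div_nonpos_of_nonpos_of_nonneg hle ht0.le]
  have h02 : (0:ℝ) < δ/2 := by linarith
  have := hmono (Set.left_mem_Icc.mpr h02.le) (Set.right_mem_Icc.mpr h02.le) h02
  have hle : g (δ/2) ≤ g 0 := (hδall (hhalf _ (Set.right_mem_Icc.mpr h02.le))).1.2
  linarith

variable {E : Type*} [NormedAddCommGroup E] [InnerProductSpace ℝ E]

lemma line_hasDerivAt (y v : E) (t : ℝ) : HasDerivAt (fun s : ℝ => y + s • v) v t := by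
  simpa using ((hasDerivAt_id t).smul_const v).const_add y

lemma line_tendsto (y v : E) : Tendsto (fun t : ℝ => y + t • v) (𝓝 0) (𝓝 y) := by
  have h : ContinuousAt (fun t : ℝ => y + t • v) 0 := (line_hasDerivAt y v 0).continuousAt
  unfold ContinuousAt at h
  simpa using h

/-- key second-derivative test along a direction, for the auxiliary function
`x ↦ σ * φ x - a * ‖x - x₀‖²` having a local max at `y`. -/
lemma second_deriv_line_nonpos {φ : E → ℝ} {y x₀ : E} {σ a : ℝ} (v : E) (hv : ‖v‖ = 1)
    (hC2 : ContDiffAt ℝ 2 φ y) (hΩ : ∀ᶠ z in 𝓝 y, ContDiffAt ℝ 2 φ z)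
    (hmax : IsLocalMax (fun x => σ * φ x - a * ‖x - x₀‖^2) y) :
    σ * fderiv ℝ (fderiv ℝ φ) y v v - 2 * a ≤ 0 := by
  set w := y - x₀ with hw
  set g : ℝ → ℝ := fun t => σ * φ (y + t • v) - a * (‖w‖^2 + 2 * ⟪w, v⟫ * t + t^2) with hgdef
  set g' : ℝ → ℝ := fun t => σ * fderiv ℝ φ (y + t • v) v - a * (2 * ⟪w, v⟫ + 2 * t) with hg'def
  have hexp : ∀ t : ℝ, ‖(y + t • v) - x₀‖^2 = ‖w‖^2 + 2 * ⟪w, v⟫ * t + t^2 := by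
    intro t
    have h1 : (y + t • v) - x₀ = w + t • v := by rw [hw]; abel
    rw [h1, @norm_add_sq_real, real_inner_smul_right, norm_smul, mul_pow, hv]
    simp [abs_sq]
    ring
  have hgeq : ∀ t : ℝ, g t = σ * φ (y + t • v) - a * ‖(y + t • v) - x₀‖^2 := by
    intro t; rw [hexp]
  have hmax0 : IsLocalMax g 0 := by
    have := (line_tendsto y v).eventually hmax
    refine this.mono fun t ht => ?_
    rw [hgeq t, hgeq 0]
    simpa using ht
  have hg : ∀ᶠ t in 𝓝 (0:ℝ), HasDerivAt g (g' t) t := by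
    have := (line_tendsto y v).eventually hΩ
    refine this.mono fun t ht => ?_
    have hφd : HasDerivAt (fun s : ℝ => φ (y + s • v)) (fderiv ℝ φ (y + t • v) v) t :=
      (ht.differentiableAt (by norm_num)).hasFDerivAt.comp_hasDerivAt t (line_hasDerivAt y v t)
    have hpoly : HasDerivAt (fun s : ℝ => a * (‖w‖^2 + 2 * ⟪w, v⟫ * s + s^2))
        (a * (2 * ⟪w, v⟫ + 2 * t)) t := by
      have h1 : HasDerivAt (fun s : ℝ => ‖w‖^2 + 2 * ⟪w, v⟫ * s + s^2)
          (2 * ⟪w, v⟫ + 2 * t) t := by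
        have := (((hasDerivAt_id t).const_mul (2 * ⟪w, v⟫)).const_add (‖w‖^2)).add
          (hasDerivAt_pow 2 t)
        simpa [mul_comm, Pi.add_def] using this
      simpa using h1.const_mul a
    simpa [Pi.sub_def] using (hφd.const_mul σ).sub hpoly
  have hL : HasDerivAt g' (σ * fderiv ℝ (fderiv ℝ φ) y v v - 2 * a) 0 := by
    have hd : DifferentiableAt ℝ (fderiv ℝ φ) y :=
      (hC2.fderiv_right (m := 1) (by norm_num)).differentiableAt (by norm_num)
    have hd' : HasFDerivAt (fderiv ℝ φ) (fderiv ℝ (fderiv ℝ φ) y) (y + (0:ℝ) • v) := by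
      simpa using hd.hasFDerivAt
    have h1 : HasDerivAt (fun t : ℝ => fderiv ℝ φ (y + t • v))
        (fderiv ℝ (fderiv ℝ φ) y v) 0 :=
      hd'.comp_hasDerivAt 0 (line_hasDerivAt y v 0)
    have h2 : HasDerivAt (fun t : ℝ => fderiv ℝ φ (y + t • v) v)
        (fderiv ℝ (fderiv ℝ φ) y v v) 0 := by
      have := h1.clm_apply (hasDerivAt_const (0:ℝ) v)
      simpa using this
    have hpoly : HasDerivAt (fun t : ℝ => a * (2 * ⟪w, v⟫ + 2 * t)) (a * 2) 0 := by
      have := ((hasDerivAt_id (0:ℝ)).const_mul 2).const_add (2 * ⟪w, v⟫)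
      simpa using (this.const_mul a)
    have h3 := (h2.const_mul σ).sub hpoly
    rw [hg'def]
    have e : σ * fderiv ℝ (fderiv ℝ φ) y v v - 2 * a = σ * fderiv ℝ (fderiv ℝ φ) y v v - a * 2 := by ring
    rw [e]; exact h3
  have hg0 : g' 0 = 0 := by
    have h0 : HasDerivAt g (g' 0) 0 := hg.self_of_nhds
    rw [← h0.deriv]
    exact hmax0.deriv_eq_zero
  exact deriv2_nonpos hg hL hg0 hmax0

end Aux


/-- The Laplacian of `f : ℝⁿ → ℝ`, as the trace of the second derivative. -/
noncomputable def laplacian {n : ℕ} (f : EuclideanSpace ℝ (Fin n) → ℝ)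
    (x : EuclideanSpace ℝ (Fin n)) : ℝ :=
  ∑ i : Fin n, iteratedFDeriv ℝ 2 f x ![EuclideanSpace.single i 1, EuclideanSpace.single i 1]

lemma laplacian_eq {n : ℕ} (f : EuclideanSpace ℝ (Fin n) → ℝ) (x : EuclideanSpace ℝ (Fin n)) :
    laplacian f x = ∑ i : Fin n,
      fderiv ℝ (fderiv ℝ f) x (EuclideanSpace.single i 1) (EuclideanSpace.single i 1) := by
  unfold laplacian
  refine Finset.sum_congr rfl fun i _ => ?_
  rw [iteratedFDeriv_two_apply]
  simp

set_option maxHeartbeats 1000000 in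
/-- **Variation estimate (decay case).** There is a dimensional constant `c_n > 0` such
that for any Dirichlet eigenfunction `(-Δ+V)φ = λφ` with `V ≥ 0` on a bounded open `Ω`,
any `c > 0` and `x₀ ∈ Ω` with `φ(x₀) ≠ 0`: if `V - λ ≥ c` uniformly on the ball
`B = B(x₀, (c_n/√c)·√(λ/c + log(c_n ‖φ‖_∞ / |φ(x₀)|))) ⊆ Ω`, then
`sup_B |φ| / inf_B |φ| ≥ 2`. -/
theorem variation_estimate_decay (n : ℕ) :
    ∃ cn : ℝ, 0 < cn ∧
      ∀ (Ω : Set (EuclideanSpace ℝ (Fin n))), IsOpen Ω → Bornology.IsBounded Ω →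
      ∀ (V φ : EuclideanSpace ℝ (Fin n) → ℝ) (lam : ℝ), 0 < lam →
      ContinuousOn V (closure Ω) → (∀ x ∈ closure Ω, 0 ≤ V x) →
      ContinuousOn φ (closure Ω) → (∀ x ∈ Ω, ContDiffAt ℝ 2 φ x) →
      (∀ x ∈ frontier Ω, φ x = 0) →
      (∀ x ∈ Ω, -laplacian φ x + V x * φ x = lam * φ x) →
      ∀ (c : ℝ), 0 < c → ∀ x₀ ∈ Ω, φ x₀ ≠ 0 →
      Metric.closedBall x₀
          ((cn / Real.sqrt c) *
            Real.sqrt (lam / c +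
              Real.log (cn * sSup ((fun y => |φ y|) '' closure Ω) / |φ x₀|))) ⊆ Ω →
      (∀ x ∈ Metric.closedBall x₀
          ((cn / Real.sqrt c) *
            Real.sqrt (lam / c +
              Real.log (cn * sSup ((fun y => |φ y|) '' closure Ω) / |φ x₀|))),
        c ≤ V x - lam) →
      2 * sInf ((fun y => |φ y|) ''
          Metric.closedBall x₀
            ((cn / Real.sqrt c) *
              Real.sqrt (lam / c +
                Real.log (cn * sSup ((fun y => |φ y|) '' closure Ω) / |φ x₀|)))) ≤
        sSup ((fun y => |φ y|) ''
          Metric.closedBall x₀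
            ((cn / Real.sqrt c) *
              Real.sqrt (lam / c +
                Real.log (cn * sSup ((fun y => |φ y|) '' closure Ω) / |φ x₀|)))) := by
  refine ⟨Real.exp (n+1), Real.exp_pos _, ?_⟩
  intro Ω hΩo hΩb V φ lam hlam hVcont hV0 hφc hφ2 hbdry heq c hc x₀ hx₀ hφx₀ hBsub hVc
  set cn : ℝ := Real.exp (n+1) with hcn
  set M : ℝ := sSup ((fun y => |φ y|) '' closure Ω) with hM
  set arg : ℝ := lam / c + Real.log (cn * M / |φ x₀|) with harg
  set R : ℝ := (cn / Real.sqrt c) * Real.sqrt arg with hR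
  set B : Set (EuclideanSpace ℝ (Fin n)) := Metric.closedBall x₀ R with hB
  -- basic positivity
  have habs : 0 < |φ x₀| := abs_pos.mpr hφx₀
  have hcn0 : (0:ℝ) < cn := Real.exp_pos _
  have hclos : IsCompact (closure Ω) := hΩb.isCompact_closure
  have habsc : ContinuousOn (fun y => |φ y|) (closure Ω) := hφc.abs
  have hMub : BddAbove ((fun y => |φ y|) '' closure Ω) :=
    (hclos.image_of_continuousOn habsc).bddAbove
  have hx₀c : x₀ ∈ closure Ω := subset_closure hx₀
  have hMx : |φ x₀| ≤ M := le_csSup hMub ⟨x₀, hx₀c, rfl⟩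
  have hlogge : (n:ℝ) + 1 ≤ Real.log (cn * M / |φ x₀|) := by
    have h1 : cn ≤ cn * M / |φ x₀| := by
      rw [mul_div_assoc]
      nlinarith [(one_le_div habs).mpr hMx]
    calc (n:ℝ) + 1 = Real.log cn := by rw [hcn, Real.log_exp]
    _ ≤ _ := Real.log_le_log hcn0 h1
  have hargpos : (0:ℝ) < arg := by
    have : (0:ℝ) < lam / c := div_pos hlam hc
    have hn0 : (0:ℝ) ≤ (n:ℝ) := Nat.cast_nonneg n
    rw [harg]; linarith
  have hR0 : 0 < R := by
    rw [hR]
    exact mul_pos (div_pos hcn0 (Real.sqrt_pos.mpr hc)) (Real.sqrt_pos.mpr hargpos)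
  -- n = 0 : contradiction
  rcases Nat.eq_zero_or_pos n with hn | hn
  · exfalso
    have hlap0 : laplacian φ x₀ = 0 := by
      rw [laplacian_eq]
      subst hn
      simp
    have h1 := heq x₀ hx₀
    rw [hlap0] at h1
    have h2 : V x₀ - lam = 0 := by
      have := mul_right_cancel₀ hφx₀ (by linarith [h1] :
        (V x₀ - lam) * φ x₀ = 0 * φ x₀)
      linarith [this]
    have h3 := hVc x₀ (Metric.mem_closedBall_self hR0.le)
    linarith
  have hn' : (0:ℝ) < (n:ℝ) := by exact_mod_cast hn
  -- c R² ≥ 2 n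
  have hcR : 2 * (n:ℝ) ≤ c * R^2 := by
    have hcnge : (n:ℝ) + 2 ≤ cn := by
      have := Real.add_one_le_exp ((n:ℝ) + 1)
      rw [hcn]; linarith
    have hRsq : c * R^2 = cn^2 * arg := by
      rw [hR, mul_pow, div_pow, Real.sq_sqrt hargpos.le, Real.sq_sqrt hc.le]
      field_simp
    rw [hRsq]
    have hargge : (n:ℝ) + 1 ≤ arg := by
      have : (0:ℝ) < lam / c := div_pos hlam hc
      rw [harg]; linarith
    nlinarith
  -- set up sup/inf on B
  have hBsubc : B ⊆ closure Ω := hBsub.trans subset_closure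
  have hBcomp : IsCompact B := isCompact_closedBall x₀ R
  have hBne : B.Nonempty := ⟨x₀, Metric.mem_closedBall_self hR0.le⟩
  have hφcB : ContinuousOn φ B := hφc.mono hBsubc
  have hSb : BddAbove ((fun y => |φ y|) '' B) :=
    (hBcomp.image_of_continuousOn (habsc.mono hBsubc)).bddAbove
  have hIb : BddBelow ((fun y => |φ y|) '' B) := by
    refine ⟨0, ?_⟩; rintro _ ⟨x, -, rfl⟩; positivity
  set m : ℝ := sInf ((fun y => |φ y|) '' B) with hm
  set S : ℝ := sSup ((fun y => |φ y|) '' B) with hS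
  have hx₀B : x₀ ∈ B := Metric.mem_closedBall_self hR0.le
  have hmle : m ≤ |φ x₀| := csInf_le hIb ⟨x₀, hx₀B, rfl⟩
  have hSx : |φ x₀| ≤ S := le_csSup hSb ⟨x₀, hx₀B, rfl⟩
  rcases le_or_gt m 0 with hm0 | hm0
  · linarith
  have hlow : ∀ x ∈ B, m ≤ |φ x| := fun x hx => csInf_le hIb ⟨x, hx, rfl⟩
  clear_value m S
  -- sign
  set σ : ℝ := if 0 < φ x₀ then 1 else -1 with hσ
  clear_value σ
  have hσx₀ : σ * φ x₀ = |φ x₀| := by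
    rw [hσ]; split_ifs with h
    · rw [abs_of_pos h]; ring
    · rw [abs_of_neg (lt_of_le_of_ne (not_lt.mp h) hφx₀)]; ring
  have hsign : ∀ x ∈ B, σ * φ x = |φ x| := by
    intro x hx
    have hne : ∀ z ∈ B, φ z ≠ 0 := by
      intro z hz h0
      have := hlow z hz
      rw [h0] at this; simp at this; linarith
    have hpos : 0 < σ * φ x := by
      by_contra hle
      push_neg at hle
      have hlt : σ * φ x < 0 := by
        rcases hle.lt_or_eq with h | h
        · exact h
        · exfalso
          have hσne : σ ≠ 0 := by rw [hσ]; split_ifs <;> norm_num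
          exact hne x hx (by
            rcases mul_eq_zero.mp h with h' | h'
            · exact absurd h' hσne
            · exact h')
      have hcont : ContinuousOn (fun z => σ * φ z) B := continuousOn_const.mul hφcB
      have hIcc : (0:ℝ) ∈ Set.Icc (σ * φ x) (σ * φ x₀) := by
        rw [hσx₀]; exact ⟨hlt.le, habs.le⟩
      obtain ⟨z, hzB, hz0⟩ :=
        (convex_closedBall x₀ R).isPreconnected.intermediate_value hx hx₀B hcont hIcc
      exact hne z hzB (by
        have hσne : σ ≠ 0 := by rw [hσ]; split_ifs <;> norm_num
        rcases mul_eq_zero.mp hz0 with h' | h'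
        · exact absurd h' hσne
        · exact h')
    have hσabs : |σ| = 1 := by rw [hσ]; split_ifs <;> norm_num
    calc σ * φ x = |σ * φ x| := (abs_of_pos hpos).symm
    _ = |σ| * |φ x| := abs_mul _ _
    _ = |φ x| := by rw [hσabs, one_mul]
  -- key estimate
  have hkey : m + c * m / (2*n) * R^2 ≤ S := by
    apply le_of_forall_sub_le
    intro ε hε
    set a : ℝ := c * m / (2*n) - ε / R^2 with ha
    clear_value a
    set h : EuclideanSpace ℝ (Fin n) → ℝ := fun x => σ * φ x - a * ‖x - x₀‖^2 with hh
    have hhcont : ContinuousOn h B := by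
      apply (continuousOn_const.mul hφcB).sub
      exact (continuousOn_const.mul (((continuous_id.sub continuous_const).norm.pow 2).continuousOn))
    obtain ⟨y, hyB, hymax⟩ := hBcomp.exists_isMaxOn hBne hhcont
    by_cases hy : y ∈ Metric.ball x₀ R
    · -- interior: contradiction
      exfalso
      have hloc : IsLocalMax h y :=
        Filter.eventually_of_mem (Metric.isOpen_ball.mem_nhds hy)
          (fun z hz => hymax (Metric.ball_subset_closedBall hz))
      have hyΩ : y ∈ Ω := hBsub hyB
      have hev : ∀ᶠ z in 𝓝 y, ContDiffAt ℝ 2 φ z :=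
        Filter.eventually_of_mem (hΩo.mem_nhds hyΩ) hφ2
      have hsum : σ * laplacian φ y - 2 * n * a ≤ 0 := by
        have h1 : ∀ i : Fin n,
            σ * fderiv ℝ (fderiv ℝ φ) y (EuclideanSpace.single i 1) (EuclideanSpace.single i 1)
              - 2 * a ≤ 0 := fun i =>
          second_deriv_line_nonpos (EuclideanSpace.single i 1)
            (by rw [EuclideanSpace.norm_single]; norm_num) (hφ2 y hyΩ) hev hloc
        have h2 := Finset.sum_nonpos (fun i (_ : i ∈ Finset.univ) => h1 i)
        rw [Finset.sum_sub_distrib, Finset.sum_const, Finset.card_univ, Fintype.card_fin,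
          nsmul_eq_mul, ← Finset.mul_sum, ← laplacian_eq] at h2
        linarith
      have hlap : laplacian φ y = (V y - lam) * φ y := by
        linear_combination -(heq y hyΩ)
      have hge : c * m ≤ σ * laplacian φ y := by
        rw [hlap]
        have h3 : σ * ((V y - lam) * φ y) = (V y - lam) * (σ * φ y) := by ring
        rw [h3, hsign y hyB]
        have h4 := hVc y hyB
        have h5 := hlow y hyB
        nlinarith
      have h2na : 2 * (n:ℝ) * a = c * m - 2 * n * ε / R^2 := by
        rw [ha]; field_simp
      have hepos : 0 < 2 * (n:ℝ) * ε / R^2 := by positivity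
      linarith
    · -- boundary
      have hdist : dist y x₀ = R :=
        le_antisymm (Metric.mem_closedBall.mp hyB) (not_lt.mp (by simpa [Metric.mem_ball] using hy))
      have hcomp : h x₀ ≤ h y := hymax hx₀B
      have hx0 : h x₀ = σ * φ x₀ := by rw [hh]; simp
      have hyv : h y = σ * φ y - a * R^2 := by
        have hnrm : ‖y - x₀‖ = R := by rw [← dist_eq_norm]; exact hdist
        simp only [hh]
        rw [hnrm]
      have hφyS : σ * φ y ≤ S := by
        rw [hsign y hyB, hS]; exact le_csSup hSb ⟨y, hyB, rfl⟩
      have haR : a * R^2 = c * m / (2*n) * R^2 - ε := by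
        rw [ha]; field_simp
      rw [hx0, hyv, hσx₀] at hcomp
      linarith
  -- conclude
  have hfinal : m ≤ c * m / (2*n) * R^2 := by
    have h2n : (0:ℝ) < 2 * n := by linarith
    rw [div_mul_eq_mul_div, le_div_iff₀ h2n]
    nlinarith
  linarith
end

section
/- The landscape function dominates iterated cutoffs: with u the landscape function for (-Δ+V) on Ω and λ > 0, define h₀ = min(λu, 1) and h_{k+1} = min( λ(-Δ+V)^{-1} h_k , 1 ). Then every Dirichlet eigenfunction φ with eigenvalue λ satisfies |φ(x)| ≤ h_k(x) ‖φ‖_{L^∞} for every k ≥ 0, and the sequence h_k is pointwise nonincreasing. -/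
open MeasureTheory

section Aux

open Metric Set

/-- 1-D second derivative test at a local minimum. -/
lemma secondDeriv_nonneg_of_isLocalMin {f : ℝ → ℝ} {a : ℝ}
    (hf : ContDiffAt ℝ 2 f a) (hmin : IsLocalMin f a) :
    0 ≤ deriv (deriv f) a := by
  by_contra hneg
  push_neg at hneg
  set c : ℝ := deriv (deriv f) a with hc
  -- f is C² on a ball around a
  obtain ⟨s, hs, hfs⟩ := hf.contDiffOn (le_refl 2) (by simp)
  obtain ⟨ε, hε, hball⟩ := Metric.mem_nhds_iff.1 hs
  have hfball : ContDiffOn ℝ 2 f (ball a ε) := hfs.mono hball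
  -- deriv f is differentiable at a
  have hd1 : DifferentiableAt ℝ (fderiv ℝ f) a :=
    (hf.fderiv_right (m := 1) (by norm_num)).differentiableAt one_ne_zero
  have hderiv_eq : deriv f = fun y => (ContinuousLinearMap.apply ℝ ℝ (1 : ℝ)) (fderiv ℝ f y) := by
    funext y
    simp [ContinuousLinearMap.apply_apply, fderiv_apply_one_eq_deriv]
  have hdd : DifferentiableAt ℝ (deriv f) a := by
    rw [hderiv_eq]
    exact ((ContinuousLinearMap.apply ℝ ℝ (1 : ℝ)).differentiableAt).comp a hd1
  have hdd' : HasDerivAt (deriv f) c a := hdd.hasDerivAt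
  have hda : deriv f a = 0 := hmin.deriv_eq_zero
  -- little-o estimate
  have hlo := hasDerivAt_iff_isLittleO.1 hdd'
  have hbd := (Asymptotics.isLittleO_iff.1 hlo) (show (0:ℝ) < -c/2 by linarith)
  -- collect eventual facts
  have hev : ∀ᶠ x' in nhds a, ‖deriv f x' - deriv f a - (x' - a) • c‖ ≤ -c/2 * ‖x' - a‖
      ∧ x' ∈ ball a ε ∧ f a ≤ f x' :=
    hbd.and ((Filter.eventually_iff.2 (ball_mem_nhds a hε)).and hmin)
  obtain ⟨δ, hδ, hδball⟩ := Metric.mem_nhds_iff.1 hev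
  -- deriv f is negative on (a, a+δ)
  have hrange : ∀ x' ∈ Ioo a (a + δ), deriv f x' < 0 := by
    intro x' hx'
    have hmem : x' ∈ ball a δ := by
      rw [mem_ball, Real.dist_eq, abs_of_pos (by linarith [hx'.1])]
      linarith [hx'.2]
    obtain ⟨h1, h2, h3⟩ := hδball hmem
    rw [hda, sub_zero] at h1
    have habs : |deriv f x' - (x' - a) * c| ≤ -c/2 * |x' - a| := by
      simpa [Real.norm_eq_abs, smul_eq_mul] using h1
    have hxa : 0 < x' - a := by linarith [hx'.1]
    rw [abs_of_pos hxa] at habs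
    have := abs_le.1 habs
    nlinarith [this.2]
  -- f is strictly decreasing on [a, a + δ'] where δ' = min δ ε / 2
  set b : ℝ := a + min δ ε / 2 with hb
  have hmde : 0 < min δ ε := lt_min hδ hε
  have hab : a < b := by simp only [hb]; linarith
  have hIcc_ball : Icc a b ⊆ ball a ε := by
    intro z hz
    rw [mem_ball, Real.dist_eq, abs_of_nonneg (by linarith [hz.1])]
    have := hz.2
    have : z - a ≤ min δ ε / 2 := by simp only [hb] at this; linarith
    have h2 : min δ ε ≤ ε := min_le_right _ _
    linarith
  have hanti : StrictAntiOn f (Icc a b) := by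
    apply strictAntiOn_of_deriv_neg (convex_Icc a b)
    · exact (hfball.continuousOn).mono hIcc_ball
    · intro z hz
      rw [interior_Icc] at hz
      apply hrange
      constructor
      · exact hz.1
      · have := hz.2
        have h2 : min δ ε ≤ δ := min_le_left _ _
        simp only [hb] at this
        linarith
  have hfb : f b < f a := hanti (left_mem_Icc.2 hab.le) (right_mem_Icc.2 hab.le) hab
  have hbball : b ∈ ball a δ := by
    rw [mem_ball, Real.dist_eq, abs_of_pos (by linarith)]
    have : min δ ε ≤ δ := min_le_left _ _
    simp only [hb]
    linarith
  exact absurd (hδball hbball).2.2 (by linarith)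


variable {n : ℕ}

local notation "EE" => EuclideanSpace ℝ (Fin n)

lemma secondFDeriv_nonneg_of_isLocalMin {g : EE → ℝ} {x : EE}
    (hg : ContDiffAt ℝ 2 g x) (hmin : IsLocalMin g x) (v : EE) :
    0 ≤ fderiv ℝ (fderiv ℝ g) x v v := by
  set A : ℝ → EE := fun t => x + t • v with hA
  have hA0 : A 0 = x := by simp [hA]
  have hAderiv : ∀ t : ℝ, HasDerivAt A v t := by
    intro t
    have h1 : HasDerivAt (fun s : ℝ => s • v) ((1:ℝ) • v) t :=
      (hasDerivAt_id t).smul_const v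
    simpa [hA, one_smul] using h1.const_add x
  have hAcont : Continuous A := by continuity
  set F : ℝ → ℝ := fun t => g (A t) with hF
  have hF2 : ContDiffAt ℝ 2 F 0 := by
    have hAc : ContDiffAt ℝ 2 A 0 := by
      apply ContDiffAt.add contDiffAt_const
      exact (contDiff_id.smul contDiff_const).contDiffAt
    have hg' := hA0 ▸ hg
    exact ContDiffAt.comp 0 hg' hAc
  have hFmin : IsLocalMin F 0 := by
    have ht : Filter.Tendsto A (nhds 0) (nhds x) := by
      rw [← hA0]; exact hAcont.continuousAt
    have := ht.eventually hmin
    simpa [hF, IsLocalMin, IsMinFilter, hA0] using this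
  have key := secondDeriv_nonneg_of_isLocalMin hF2 hFmin
  obtain ⟨s, hs, hgs⟩ := hg.contDiffOn (le_refl 2) (by simp)
  set U := interior s with hU
  have hUo : IsOpen U := isOpen_interior
  have hxU : x ∈ U := mem_interior_iff_mem_nhds.2 hs
  have hgU : ContDiffOn ℝ 2 g U := hgs.mono interior_subset
  have hdiff : ∀ y ∈ U, DifferentiableAt ℝ g y := fun y hy =>
    ((hgU.differentiableOn (by norm_num)).differentiableAt (hUo.mem_nhds hy))
  have hev : ∀ᶠ t in nhds 0, A t ∈ U := by
    have ht : Filter.Tendsto A (nhds 0) (nhds x) := hA0 ▸ hAcont.continuousAt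
    exact ht.eventually (hUo.eventually_mem hxU)
  have hFd : ∀ t, A t ∈ U → HasDerivAt F (fderiv ℝ g (A t) v) t := fun t ht =>
    ((hdiff _ ht).hasFDerivAt.comp_hasDerivAt t (hAderiv t))
  have hderivF : deriv F =ᶠ[nhds 0] fun t => fderiv ℝ g (A t) v :=
    hev.mono fun t ht => (hFd t ht).deriv
  have h2 : HasDerivAt (fun t => fderiv ℝ g (A t) v) (fderiv ℝ (fderiv ℝ g) x v v) 0 := by
    have hd1 : DifferentiableAt ℝ (fderiv ℝ g) x :=
      (hg.fderiv_right (m := 1) (by norm_num)).differentiableAt one_ne_zero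
    have hfd : HasFDerivAt (fderiv ℝ g) (fderiv ℝ (fderiv ℝ g) x) (A 0) := by
      rw [hA0]; exact hd1.hasFDerivAt
    have hcomp : HasDerivAt (fun t => fderiv ℝ g (A t)) (fderiv ℝ (fderiv ℝ g) x v) 0 :=
      hfd.comp_hasDerivAt 0 (hAderiv 0)
    have := ((ContinuousLinearMap.apply ℝ ℝ v).hasFDerivAt).comp_hasDerivAt 0 hcomp
    simpa [Function.comp_def] using this
  have heq : deriv (deriv F) 0 = fderiv ℝ (fderiv ℝ g) x v v := by
    rw [hderivF.deriv_eq]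
    exact h2.deriv
  linarith [heq ▸ key]

lemma laplacian_apply_eq {f : EE → ℝ} {x : EE} :
    laplacian f x = ∑ i : Fin n,
      fderiv ℝ (fderiv ℝ f) x (EuclideanSpace.single i 1) (EuclideanSpace.single i 1) := by
  unfold laplacian
  refine Finset.sum_congr rfl fun i _ => ?_
  rw [iteratedFDeriv_two_apply]
  simp

lemma laplacian_nonneg_of_isLocalMin {g : EE → ℝ} {x : EE}
    (hg : ContDiffAt ℝ 2 g x) (hmin : IsLocalMin g x) :
    0 ≤ laplacian g x := by
  rw [laplacian_apply_eq]
  exact Finset.sum_nonneg fun i _ => secondFDeriv_nonneg_of_isLocalMin hg hmin _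

/-- Linearity of the laplacian for functions `C²` at a point. -/
lemma laplacian_combo {f g : EE → ℝ} {x : EE} (a b : ℝ)
    (hf : ContDiffAt ℝ 2 f x) (hg : ContDiffAt ℝ 2 g x) :
    laplacian (fun y => a * f y + b * g y) x = a * laplacian f x + b * laplacian g x := by
  obtain ⟨s, hs, hfs⟩ := hf.contDiffOn (le_refl 2) (by simp)
  obtain ⟨s', hs', hgs⟩ := hg.contDiffOn (le_refl 2) (by simp)
  set U := interior s ∩ interior s' with hUdef
  have hUo : IsOpen U := isOpen_interior.inter isOpen_interior
  have hxU : x ∈ U := ⟨mem_interior_iff_mem_nhds.2 hs, mem_interior_iff_mem_nhds.2 hs'⟩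
  have hdf : ∀ y ∈ U, DifferentiableAt ℝ f y := fun y hy =>
    ((hfs.mono interior_subset).differentiableOn (by norm_num)).differentiableAt
      (isOpen_interior.mem_nhds hy.1)
  have hdg : ∀ y ∈ U, DifferentiableAt ℝ g y := fun y hy =>
    ((hgs.mono interior_subset).differentiableOn (by norm_num)).differentiableAt
      (isOpen_interior.mem_nhds hy.2)
  have hev : fderiv ℝ (fun y => a * f y + b * g y) =ᶠ[nhds x]
      fun y => a • fderiv ℝ f y + b • fderiv ℝ g y := by
    filter_upwards [hUo.mem_nhds hxU] with y hy
    rw [fderiv_fun_add ((hdf y hy).const_mul a) ((hdg y hy).const_mul b),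
      fderiv_const_mul (hdf y hy), fderiv_const_mul (hdg y hy)]
  have hd2f : DifferentiableAt ℝ (fderiv ℝ f) x :=
    (hf.fderiv_right (m := 1) (by norm_num)).differentiableAt one_ne_zero
  have hd2g : DifferentiableAt ℝ (fderiv ℝ g) x :=
    (hg.fderiv_right (m := 1) (by norm_num)).differentiableAt one_ne_zero
  have hkey : fderiv ℝ (fderiv ℝ (fun y => a * f y + b * g y)) x =
      a • fderiv ℝ (fderiv ℝ f) x + b • fderiv ℝ (fderiv ℝ g) x := by
    rw [hev.fderiv_eq, fderiv_fun_add (f := fun y => a • fderiv ℝ f y) (g := fun y => b • fderiv ℝ g y)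
        (hd2f.const_smul a) (hd2g.const_smul b),
      fderiv_fun_const_smul hd2f a, fderiv_fun_const_smul hd2g b]
  rw [laplacian_apply_eq, laplacian_apply_eq, laplacian_apply_eq, hkey,
    Finset.mul_sum, Finset.mul_sum, ← Finset.sum_add_distrib]
  refine Finset.sum_congr rfl fun i _ => ?_
  simp [smul_eq_mul]

/-- The laplacian of the perturbation `C - xᵢ²`. -/
lemma laplacian_perturb (i : Fin n) (C : ℝ) (x : EE) :
    laplacian (fun y : EE => C - y i * y i) x = -2 := by
  set π : EE →L[ℝ] ℝ := EuclideanSpace.proj i with hπ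
  have hπap : ∀ y : EE, π y = y i := fun y => rfl
  set T : EE →L[ℝ] (EE →L[ℝ] ℝ) := -((2:ℝ) • (π.smulRight π)) with hT
  have hfd : ∀ y : EE, fderiv ℝ (fun z : EE => C - z i * z i) y = T y := by
    intro y
    have h1 : HasFDerivAt (fun z : EE => π z * π z) (π y • π + π y • π) y :=
      (π.hasFDerivAt).mul (π.hasFDerivAt)
    have h2 : HasFDerivAt (fun z : EE => C - z i * z i) (0 - (π y • π + π y • π)) y :=
      (hasFDerivAt_const C y).sub h1
    rw [h2.fderiv]
    ext w
    simp [hT, ContinuousLinearMap.smulRight_apply, hπap, two_mul]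
    try ring
  have hfd2 : fderiv ℝ (fderiv ℝ (fun z : EE => C - z i * z i)) x = T := by
    have : fderiv ℝ (fun z : EE => C - z i * z i) = ⇑T := funext hfd
    rw [this, ContinuousLinearMap.fderiv]
  rw [laplacian_apply_eq, hfd2]
  have hterm : ∀ j : Fin n,
      T (EuclideanSpace.single j 1) (EuclideanSpace.single j 1) =
        if j = i then (-2 : ℝ) else 0 := by
    intro j
    have hπj : π (EuclideanSpace.single j 1) = if i = j then 1 else 0 := by
      rw [hπap, EuclideanSpace.single_apply]
    by_cases hji : j = i
    · subst hji
      simp only [if_pos rfl] at hπj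
      simp [hT, ContinuousLinearMap.smulRight_apply, hπj]
      try norm_num
    · have : ¬ i = j := fun hc => hji hc.symm
      simp only [if_neg this] at hπj
      simp [hT, ContinuousLinearMap.smulRight_apply, hπj, hji]
  rw [Finset.sum_congr rfl fun j _ => hterm j]
  simp

lemma laplacian_neg {f : EuclideanSpace ℝ (Fin n) → ℝ} {x : EuclideanSpace ℝ (Fin n)} :
    laplacian (fun y => -f y) x = -laplacian f x := by
  unfold laplacian
  rw [← Finset.sum_neg_distrib]
  refine Finset.sum_congr rfl fun i _ => ?_
  have : (fun y => -f y) = -f := rfl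
  rw [this, iteratedFDeriv_neg_apply]
  simp


/-- Weak maximum principle for `-Δ + V` with `V ≥ 0` on a bounded open set. -/
lemma maxprin {Ω : Set EE} (hΩo : IsOpen Ω) (hΩb : Bornology.IsBounded Ω)
    {V f : EE → ℝ} (hV0 : ∀ x ∈ Ω, 0 ≤ V x)
    (hfc : ContinuousOn f (closure Ω)) (hf2 : ∀ x ∈ Ω, ContDiffAt ℝ 2 f x)
    (hfb : ∀ x ∈ frontier Ω, 0 ≤ f x)
    (hfeq : ∀ x ∈ Ω, 0 ≤ -laplacian f x + V x * f x)
    (hpos : 0 < n ∨ ∀ x ∈ Ω, 0 < V x) :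
    ∀ x ∈ closure Ω, 0 ≤ f x := by
  by_contra hcon
  push_neg at hcon
  obtain ⟨y, hy, hfy⟩ := hcon
  have hcomp : IsCompact (closure Ω) := hΩb.isCompact_closure
  have hclne : (closure Ω).Nonempty := ⟨y, hy⟩
  -- membership dichotomy
  have hmem : ∀ z ∈ closure Ω, z ∈ Ω ∨ z ∈ frontier Ω := by
    intro z hz
    by_cases hzΩ : z ∈ Ω
    · exact Or.inl hzΩ
    · exact Or.inr ⟨hz, by rwa [hΩo.interior_eq]⟩
  have hloc : ∀ g : EE → ℝ, ∀ x₀ ∈ Ω, IsMinOn g (closure Ω) x₀ → IsLocalMin g x₀ := by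
    intro g x₀ hx₀ hmin
    exact hmin.isLocalMin (Filter.mem_of_superset (hΩo.mem_nhds hx₀) subset_closure)
  rcases hpos with hn | hV
  · -- n > 0 : perturbation argument
    set i : Fin n := ⟨0, hn⟩ with hi
    obtain ⟨R, hR⟩ := isBounded_iff_forall_norm_le.1 hΩb.closure
    have hRnn : 0 ≤ R := le_trans (norm_nonneg y) (hR y hy)
    set C : ℝ := R ^ 2 + 1 with hC
    set ψ : EE → ℝ := fun z => C - z i * z i with hψ
    have habs : ∀ z : EE, |z i| ≤ ‖z‖ := by
      intro z
      rw [EuclideanSpace.norm_eq]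
      rw [Real.le_sqrt (abs_nonneg _)]
      have := Finset.single_le_sum (f := fun j => ‖z j‖ ^ 2)
        (fun j _ => sq_nonneg _) (Finset.mem_univ i)
      · simpa [Real.norm_eq_abs] using this
      · positivity
    have hcoord : ∀ z ∈ closure Ω, z i * z i ≤ R ^ 2 := by
      intro z hz
      have h1 := habs z
      have h2 := hR z hz
      nlinarith [abs_nonneg (z i), abs_mul_abs_self (z i)]
    have hψpos : ∀ z ∈ closure Ω, 1 ≤ ψ z := by
      intro z hz
      have := hcoord z hz
      simp only [hψ, hC]
      linarith
    have hψC : ∀ z : EE, ψ z ≤ C := by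
      intro z
      simp only [hψ]
      nlinarith [mul_self_nonneg (z i)]
    have hCpos : 0 < C := by positivity
    set ε : ℝ := -f y / (2 * C) with hε
    have hεpos : 0 < ε := by
      apply div_pos (by linarith) (by linarith)
    have hπcont : Continuous fun z : EE => z i := (EuclideanSpace.proj (𝕜 := ℝ) i).continuous
    have hψsm : ContDiff ℝ 2 ψ := by
      have hπsm : ContDiff ℝ 2 fun z : EE => z i := (EuclideanSpace.proj (𝕜 := ℝ) i).contDiff
      exact contDiff_const.sub (hπsm.mul hπsm)
    set g : EE → ℝ := fun z => f z + ε * ψ z with hg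
    have hgc : ContinuousOn g (closure Ω) :=
      hfc.add ((continuous_const.mul hψsm.continuous).continuousOn)
    have hg2 : ∀ x ∈ Ω, ContDiffAt ℝ 2 g x := fun x hx =>
      (hf2 x hx).add (contDiffAt_const.mul hψsm.contDiffAt)
    clear_value C ε ψ g
    obtain ⟨x₀, hx₀cl, hminOn⟩ := hcomp.exists_isMinOn hclne hgc
    have hεC : ε * C = -f y / 2 := by
      field_simp [hε]
      rw [hε]; field_simp [hCpos.ne']
    have hgy : g y < 0 := by
      have h1 : ε * ψ y ≤ ε * C := mul_le_mul_of_nonneg_left (hψC y) hεpos.le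
      simp only [hg]
      linarith
    have hgx₀ : g x₀ < 0 := lt_of_le_of_lt (hminOn hy) hgy
    have hx₀Ω : x₀ ∈ Ω := by
      rcases hmem x₀ hx₀cl with h | h
      · exact h
      · exfalso
        have h1 := hfb x₀ h
        have h2 := hψpos x₀ (frontier_subset_closure h)
        have : 0 < g x₀ := by
          simp only [hg]
          nlinarith
        linarith
    have hlapg : 0 ≤ laplacian g x₀ :=
      laplacian_nonneg_of_isLocalMin (hg2 x₀ hx₀Ω) (hloc g x₀ hx₀Ω hminOn)
    have hlapeq : laplacian g x₀ = laplacian f x₀ - 2 * ε := by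
      have h1 : g = fun z => 1 * f z + ε * ψ z := by
        funext z
        simp [hg]
      rw [h1, laplacian_combo 1 ε (hf2 x₀ hx₀Ω) hψsm.contDiffAt, hψ,
        laplacian_perturb i C x₀]
      ring
    have hfx₀neg : f x₀ < 0 := by
      have h2 := hψpos x₀ hx₀cl
      have : f x₀ = g x₀ - ε * ψ x₀ := by simp [hg]
      nlinarith
    have hVf : V x₀ * f x₀ ≤ 0 := mul_nonpos_of_nonneg_of_nonpos (hV0 x₀ hx₀Ω) hfx₀neg.le
    have := hfeq x₀ hx₀Ω
    nlinarith
  · -- V > 0 on Ω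
    obtain ⟨x₀, hx₀cl, hminOn⟩ := hcomp.exists_isMinOn hclne hfc
    have hfx₀ : f x₀ < 0 := lt_of_le_of_lt (hminOn hy) hfy
    have hx₀Ω : x₀ ∈ Ω := by
      rcases hmem x₀ hx₀cl with h | h
      · exact h
      · exact absurd hfx₀ (not_lt.2 (hfb x₀ h))
    have hlap : 0 ≤ laplacian f x₀ :=
      laplacian_nonneg_of_isLocalMin (hf2 x₀ hx₀Ω) (hloc f x₀ hx₀Ω hminOn)
    have := hfeq x₀ hx₀Ω
    nlinarith [hV x₀ hx₀Ω, mul_pos (hV x₀ hx₀Ω) (neg_pos.2 hfx₀)]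

/-- Comparison principle: if `(-Δ+V) q ≤ a (-Δ+V) p` in `Ω` and `q ≤ a p` on `∂Ω`,
then `q ≤ a p` on `closure Ω`. -/
lemma comparison {Ω : Set EE} (hΩo : IsOpen Ω) (hΩb : Bornology.IsBounded Ω)
    {V : EE → ℝ} (hV0 : ∀ x ∈ Ω, 0 ≤ V x)
    (hpos : 0 < n ∨ ∀ x ∈ Ω, 0 < V x)
    {a : ℝ} {p q : EE → ℝ}
    (hpc : ContinuousOn p (closure Ω)) (hp2 : ∀ x ∈ Ω, ContDiffAt ℝ 2 p x)
    (hqc : ContinuousOn q (closure Ω)) (hq2 : ∀ x ∈ Ω, ContDiffAt ℝ 2 q x)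
    (hfront : ∀ x ∈ frontier Ω, q x ≤ a * p x)
    (hin : ∀ x ∈ Ω, -laplacian q x + V x * q x ≤ a * (-laplacian p x + V x * p x)) :
    ∀ x ∈ closure Ω, q x ≤ a * p x := by
  set f : EE → ℝ := fun x => a * p x + (-1) * q x with hf
  have hfc : ContinuousOn f (closure Ω) :=
    (continuousOn_const.mul hpc).add (continuousOn_const.mul hqc)
  have hf2 : ∀ x ∈ Ω, ContDiffAt ℝ 2 f x := fun x hx =>
    (contDiffAt_const.mul (hp2 x hx)).add (contDiffAt_const.mul (hq2 x hx))
  have hfb : ∀ x ∈ frontier Ω, 0 ≤ f x := by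
    intro x hx
    have := hfront x hx
    simp only [hf]
    linarith
  have hfeq : ∀ x ∈ Ω, 0 ≤ -laplacian f x + V x * f x := by
    intro x hx
    have hlap : laplacian f x = a * laplacian p x + (-1) * laplacian q x := by
      rw [hf]
      exact laplacian_combo a (-1) (hp2 x hx) (hq2 x hx)
    have := hin x hx
    rw [hlap]; simp only [hf]
    ring_nf
    ring_nf at this
    linarith
  have := maxprin hΩo hΩb hV0 hfc hf2 hfb hfeq hpos
  intro x hx
  have h2 := this x hx
  simp only [hf] at h2
  linarith

end Aux

/-- **The landscape function dominates iterated cutoffs.** With `u` the landscape function,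
`h 0 = min(λu, 1)`, `w k` the Dirichlet solution of `(-Δ+V)(w k) = h k`, and
`h (k+1) = min(λ · w k, 1)`, every Dirichlet eigenfunction with eigenvalue `λ` satisfies
`|φ(x)| ≤ h k (x) ‖φ‖_{L^∞}` for every `k`, and `h k` is pointwise nonincreasing in `k`. -/
theorem iterated_cutoff_landscape {n : ℕ} (Ω : Set (EuclideanSpace ℝ (Fin n)))
    (hΩo : IsOpen Ω) (hΩb : Bornology.IsBounded Ω) (hΩne : Ω.Nonempty)
    (V φ u : EuclideanSpace ℝ (Fin n) → ℝ)
    (h w : ℕ → EuclideanSpace ℝ (Fin n) → ℝ) (lam : ℝ) (hlam : 0 < lam)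
    (hV : ContinuousOn V (closure Ω)) (hVnonneg : ∀ x ∈ closure Ω, 0 ≤ V x)
    (hφc : ContinuousOn φ (closure Ω)) (hφ2 : ∀ x ∈ Ω, ContDiffAt ℝ 2 φ x)
    (hφbd : ∀ x ∈ frontier Ω, φ x = 0)
    (hφeq : ∀ x ∈ Ω, -laplacian φ x + V x * φ x = lam * φ x)
    (huc : ContinuousOn u (closure Ω)) (hu2 : ∀ x ∈ Ω, ContDiffAt ℝ 2 u x)
    (hubd : ∀ x ∈ frontier Ω, u x = 0)
    (hueq : ∀ x ∈ Ω, -laplacian u x + V x * u x = 1)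
    (hh0 : ∀ x, h 0 x = min (lam * u x) 1)
    (hwc : ∀ k, ContinuousOn (w k) (closure Ω))
    (hw2 : ∀ k, ∀ x ∈ Ω, ContDiffAt ℝ 2 (w k) x)
    (hwbd : ∀ k, ∀ x ∈ frontier Ω, w k x = 0)
    (hweq : ∀ k, ∀ x ∈ Ω, -laplacian (w k) x + V x * w k x = h k x)
    (hhsucc : ∀ k, ∀ x, h (k + 1) x = min (lam * w k x) 1) :
    (∀ k : ℕ, ∀ x ∈ Ω, |φ x| ≤ h k x * sSup ((fun y => |φ y|) '' closure Ω)) ∧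
      (∀ k : ℕ, ∀ x ∈ Ω, h (k + 1) x ≤ h k x) := by
  have hV0 : ∀ x ∈ Ω, 0 ≤ V x := fun x hx => hVnonneg x (subset_closure hx)
  -- positivity hypothesis for the maximum principle
  have hpos : 0 < n ∨ ∀ x ∈ Ω, 0 < V x := by
    rcases Nat.eq_zero_or_pos n with hn | hn
    · right
      intro x hx
      have hlap0 : laplacian u x = 0 := by
        subst hn
        simp [laplacian]
      have := hueq x hx
      rw [hlap0] at this
      have hVu : V x * u x = 1 := by linarith
      rcases lt_or_eq_of_le (hV0 x hx) with hp | hp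
      · exact hp
      · exfalso; rw [← hp] at hVu; simp at hVu
    · left; exact hn
  set M : ℝ := sSup ((fun y => |φ y|) '' closure Ω) with hM
  have hclne : (closure Ω).Nonempty := hΩne.closure
  have hcomp : IsCompact (closure Ω) := hΩb.isCompact_closure
  have habsc : ContinuousOn (fun y => |φ y|) (closure Ω) := hφc.abs
  obtain ⟨z, hz, hzmax⟩ := hcomp.exists_isMaxOn hclne habsc
  have hbdd : BddAbove ((fun y => |φ y|) '' closure Ω) := by
    refine ⟨|φ z|, ?_⟩
    rintro b ⟨y, hy, rfl⟩
    exact hzmax hy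
  have hMbound : ∀ x ∈ closure Ω, |φ x| ≤ M := fun x hx =>
    le_csSup hbdd (Set.mem_image_of_mem _ hx)
  have hM0 : 0 ≤ M := by
    obtain ⟨y, hy⟩ := hclne
    exact le_trans (abs_nonneg (φ y)) (hMbound y hy)
  -- negated eigenfunction facts
  have hnφc : ContinuousOn (fun y => -φ y) (closure Ω) := hφc.neg
  have hnφ2 : ∀ x ∈ Ω, ContDiffAt ℝ 2 (fun y => -φ y) x := fun x hx => (hφ2 x hx).neg
  have hnφeq : ∀ x ∈ Ω, -laplacian (fun y => -φ y) x + V x * (-φ x) = lam * (-φ x) := by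
    intro x hx
    rw [laplacian_neg]
    have := hφeq x hx
    ring_nf
    ring_nf at this
    linarith
  -- generic domination step: from |φ| ≤ c on Ω where c x = value of (-Δ+V) p, get |φ| ≤ lam M p
  -- h k ≤ 1 always
  have hhle1 : ∀ k x, h k x ≤ 1 := by
    intro k x
    cases k with
    | zero => rw [hh0]; exact min_le_right _ _
    | succ k => rw [hhsucc]; exact min_le_right _ _
  -- Part 1: |φ| ≤ h k * M on Ω, by induction
  have part1 : ∀ k : ℕ, ∀ x ∈ Ω, |φ x| ≤ h k x * M := by
    intro k
    induction k with
    | zero =>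
      -- |φ| ≤ lam * M * u on closure Ω
      have hup : ∀ x ∈ closure Ω, φ x ≤ (lam * M) * u x := by
        apply comparison hΩo hΩb hV0 hpos huc hu2 hφc hφ2
        · intro x hx; rw [hφbd x hx, hubd x hx]; simp
        · intro x hx
          rw [hφeq x hx, hueq x hx, mul_one]
          have := hMbound x (subset_closure hx)
          nlinarith [le_abs_self (φ x), hlam.le]
      have hdn : ∀ x ∈ closure Ω, -φ x ≤ (lam * M) * u x := by
        apply comparison hΩo hΩb hV0 hpos huc hu2 hnφc hnφ2
        · intro x hx; rw [hφbd x hx, hubd x hx]; simp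
        · intro x hx
          rw [hnφeq x hx, hueq x hx, mul_one]
          have := hMbound x (subset_closure hx)
          nlinarith [neg_abs_le (φ x), hlam.le]
      intro x hx
      have h1 : |φ x| ≤ lam * M * u x :=
        abs_le.2 ⟨by linarith [hdn x (subset_closure hx)], hup x (subset_closure hx)⟩
      rw [hh0, min_mul_of_nonneg _ _ hM0, one_mul]
      exact le_min (by nlinarith) (hMbound x (subset_closure hx))
    | succ k ih =>
      have hup : ∀ x ∈ closure Ω, φ x ≤ (lam * M) * w k x := by
        apply comparison hΩo hΩb hV0 hpos (hwc k) (hw2 k) hφc hφ2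
        · intro x hx; rw [hφbd x hx, hwbd k x hx]; simp
        · intro x hx
          rw [hφeq x hx, hweq k x hx]
          have := ih x hx
          nlinarith [le_abs_self (φ x), hlam.le]
      have hdn : ∀ x ∈ closure Ω, -φ x ≤ (lam * M) * w k x := by
        apply comparison hΩo hΩb hV0 hpos (hwc k) (hw2 k) hnφc hnφ2
        · intro x hx; rw [hφbd x hx, hwbd k x hx]; simp
        · intro x hx
          rw [hnφeq x hx, hweq k x hx]
          have := ih x hx
          nlinarith [neg_abs_le (φ x), hlam.le]
      intro x hx
      have h1 : |φ x| ≤ lam * M * w k x :=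
        abs_le.2 ⟨by linarith [hdn x (subset_closure hx)], hup x (subset_closure hx)⟩
      rw [hhsucc, min_mul_of_nonneg _ _ hM0, one_mul]
      exact le_min (by nlinarith) (hMbound x (subset_closure hx))
  -- Part 2: monotonicity
  have part2 : ∀ k : ℕ, ∀ x ∈ Ω, h (k + 1) x ≤ h k x := by
    intro k
    induction k with
    | zero =>
      have hw0u : ∀ x ∈ closure Ω, w 0 x ≤ 1 * u x := by
        apply comparison hΩo hΩb hV0 hpos huc hu2 (hwc 0) (hw2 0)
        · intro x hx; rw [hwbd 0 x hx, hubd x hx]; simp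
        · intro x hx
          rw [hweq 0 x hx, hueq x hx]
          have := hhle1 0 x
          linarith
      intro x hx
      rw [hhsucc, hh0]
      refine min_le_min ?_ le_rfl
      have := hw0u x (subset_closure hx)
      nlinarith [hlam.le]
    | succ k ih =>
      have hwmono : ∀ x ∈ closure Ω, w (k + 1) x ≤ 1 * w k x := by
        apply comparison hΩo hΩb hV0 hpos (hwc k) (hw2 k) (hwc (k+1)) (hw2 (k+1))
        · intro x hx; rw [hwbd (k+1) x hx, hwbd k x hx]; simp
        · intro x hx
          rw [hweq (k+1) x hx, hweq k x hx, one_mul]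
          -- need h (k+1) ≤ h k on Ω : that's ih
          exact ih x hx
      intro x hx
      rw [hhsucc, hhsucc]
      refine min_le_min ?_ le_rfl
      have := hwmono x (subset_closure hx)
      nlinarith [hlam.le]
  exact ⟨part1, part2⟩
end
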